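/- arXiv:1512.05490 — 2 statements merged into one kernel-verified Lean document; each statement's English description precedes it below -/
import Mathlib

section
/- Let S = ((X,d), (f_i)_{i∈I}) be an iterated function system consisting of convex contractions. For each infinite word ω = ω₁ω₂ω₃… ∈ I^ℕ there exists a point a_ω ∈ X such that for every nonempty compact B ⊆ X, h(f_{ω₁} ∘ f_{ω₂} ∘ … ∘ f_{ω_n}(B), {a_ω}) → 0 as n → ∞. -/
/-!
Write `g x y = d(x, y) + ∑ᵢ d(fᵢ x, fᵢ y)`. Two letters of a word contract the distance by
the uniform constant `K = maxᵢⱼ (aᵢⱼ + bᵢⱼ + cᵢⱼ) < 1` relative to the distances one or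
two letters earlier, so `d(f_{[ω]ₙ} x, f_{[ω]ₙ} y) ≤ K^⌊n/2⌋ g x y`. Comparing
`f_{[ω]ₙ} x` with `f_{[ω]ₙ₊₁} x = f_{[ω]ₙ} (f_{ωₙ₊₁} x)` shows that the orbit of a point is
Cauchy; its limit `a_ω` is then the uniform limit of `f_{[ω]ₙ}` on any compact set, on
which `g (·) x` is bounded, and uniform convergence to a constant is convergence of the
images in the Hausdorff distance.
-/

open Filter Topology NNReal

/-- `compWord f ω n = f (ω 0) ∘ f (ω 1) ∘ ... ∘ f (ω (n-1))`, i.e. the composition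
`f_{ω₁} ∘ ... ∘ f_{ω_n}` determined by the first `n` letters of the word `ω`. -/
def compWord {I X : Type*} (f : I → X → X) : (ℕ → I) → ℕ → X → X
  | _, 0 => id
  | ω, n + 1 => f (ω 0) ∘ compWord f (fun k => ω (k + 1)) n

theorem compWord_succ_apply {I X : Type*} (f : I → X → X) (ω : ℕ → I) (n : ℕ) (x : X) :
    compWord f ω (n + 1) x = compWord f ω n (f (ω n) x) := by
  induction n generalizing ω with
  | zero => rfl
  | succ n ih => exact congrArg (f (ω 0)) (ih fun k => ω (k + 1))

theorem summable_pow_div_two {r : ℝ} (h₀ : 0 ≤ r) (h₁ : r < 1) :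
    Summable fun n : ℕ => r ^ (n / 2) := by
  have hgeom := summable_geometric_of_lt_one h₀ h₁
  refine Summable.even_add_odd ?_ ?_
  · simpa only [Nat.mul_div_cancel_left _ two_pos] using hgeom
  · simpa only [Nat.mul_add_div two_pos, Nat.reduceDiv, add_zero] using hgeom

theorem TendstoUniformlyOn.tendsto_hausdorffEDist_image_singleton {ι α β : Type*}
    [PseudoEMetricSpace β] {F : ι → α → β} {p : β} {l : Filter ι} {s : Set α}
    (h : TendstoUniformlyOn F (fun _ => p) l s) (hs : s.Nonempty) :
    Tendsto (fun n => Metric.hausdorffEDist (F n '' s) {p}) l (𝓝 0) := by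
  refine ENNReal.tendsto_nhds_zero.2 fun ε hε => ?_
  filter_upwards [EMetric.tendstoUniformlyOn_iff.1 h ε hε] with n hn
  refine Metric.hausdorffEDist_le_of_mem_edist ?_ ?_
  · rintro _ ⟨z, hz, rfl⟩
    exact ⟨p, rfl, edist_comm p (F n z) ▸ (hn z hz).le⟩
  · rintro _ rfl
    obtain ⟨z, hz⟩ := hs
    exact ⟨F n z, Set.mem_image_of_mem _ hz, (hn z hz).le⟩

theorem tendstoUniformlyOn_of_dist_le {ι α β : Type*} [PseudoMetricSpace β]
    {F : ι → α → β} {f : α → β} {l : Filter ι} {s : Set α} {ε : ι → ℝ}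
    (hε : Tendsto ε l (𝓝 0)) (h : ∀ᶠ n in l, ∀ x ∈ s, dist (f x) (F n x) ≤ ε n) :
    TendstoUniformlyOn F f l s := by
  refine Metric.tendstoUniformlyOn_iff.2 fun δ hδ => ?_
  filter_upwards [h, hε.eventually (gt_mem_nhds hδ)] with n hn hεn x hx
  exact (hn x hx).trans_lt hεn

section ConvexContraction

variable {X I : Type*} [PseudoMetricSpace X]

/-- Max-form of the condition
`d(fᵢ fⱼ x, fᵢ fⱼ y) ≤ aᵢⱼ d(x, y) + bᵢⱼ d(fᵢ x, fᵢ y) + cᵢⱼ d(fⱼ x, fⱼ y)` with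
`aᵢⱼ + bᵢⱼ + cᵢⱼ ≤ K`. -/
def ConvexContractingWith (K : ℝ≥0) (f : I → X → X) : Prop :=
  K < 1 ∧ ∀ i j (x y : X), dist (f i (f j x)) (f i (f j y)) ≤
    K * max (dist x y) (max (dist (f i x) (f i y)) (dist (f j x) (f j y)))

theorem exists_convexContractingWith [Finite I] [Nonempty I] {f : I → X → X}
    {a b c : I → I → ℝ} (ha : ∀ i j, 0 ≤ a i j) (hb : ∀ i j, 0 ≤ b i j)
    (hc : ∀ i j, 0 ≤ c i j) (hd : ∀ i j, a i j + b i j + c i j < 1)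
    (hcc : ∀ i j (x y : X), dist (f i (f j x)) (f i (f j y)) ≤
      a i j * dist x y + b i j * dist (f i x) (f i y) + c i j * dist (f j x) (f j y)) :
    ∃ K, ConvexContractingWith K f := by
  obtain ⟨⟨i₀, j₀⟩, hmax⟩ := Finite.exists_max fun p : I × I => a p.1 p.2 + b p.1 p.2 + c p.1 p.2
  set K := a i₀ j₀ + b i₀ j₀ + c i₀ j₀
  have hK : 0 ≤ K := add_nonneg (add_nonneg (ha _ _) (hb _ _)) (hc _ _)
  refine ⟨K.toNNReal, by simpa [← NNReal.coe_lt_coe, hK] using hd i₀ j₀, fun i j x y => ?_⟩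
  set m := max (dist x y) (max (dist (f i x) (f i y)) (dist (f j x) (f j y)))
  have hm : 0 ≤ m := le_max_of_le_left dist_nonneg
  calc dist (f i (f j x)) (f i (f j y))
      ≤ a i j * m + b i j * m + c i j * m := by
        refine (hcc i j x y).trans (add_le_add (add_le_add ?_ ?_) ?_)
        · exact mul_le_mul_of_nonneg_left (le_max_left _ _) (ha i j)
        · exact mul_le_mul_of_nonneg_left (le_max_of_le_right (le_max_left _ _)) (hb i j)
        · exact mul_le_mul_of_nonneg_left (le_max_of_le_right (le_max_right _ _)) (hc i j)
    _ ≤ K * m := by rw [← add_mul, ← add_mul]; exact mul_le_mul_of_nonneg_right (hmax (i, j)) hm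
    _ = K.toNNReal * m := by rw [Real.coe_toNNReal K hK]

variable [Fintype I]

def graphDist (f : I → X → X) (x y : X) : ℝ :=
  dist x y + ∑ i, dist (f i x) (f i y)

theorem graphDist_nonneg (f : I → X → X) (x y : X) : 0 ≤ graphDist f x y :=
  add_nonneg dist_nonneg (Finset.sum_nonneg fun _ _ => dist_nonneg)

theorem dist_le_graphDist (f : I → X → X) (x y : X) : dist x y ≤ graphDist f x y :=
  le_add_of_nonneg_right (Finset.sum_nonneg fun _ _ => dist_nonneg)

theorem dist_apply_le_graphDist (f : I → X → X) (i : I) (x y : X) :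
    dist (f i x) (f i y) ≤ graphDist f x y :=
  (Finset.single_le_sum (fun j _ => dist_nonneg (x := f j x) (y := f j y))
    (Finset.mem_univ i)).trans (le_add_of_nonneg_left dist_nonneg)

theorem continuous_graphDist_left {f : I → X → X} (hf : ∀ i, Continuous (f i)) (y : X) :
    Continuous fun x => graphDist f x y :=
  (continuous_id.dist continuous_const).add
    (continuous_finsetSum _ fun i _ => (hf i).dist continuous_const)

namespace ConvexContractingWith

variable {K : ℝ≥0} {f : I → X → X}

theorem dist_compWord_le (hf : ConvexContractingWith K f) (ω : ℕ → I) (n : ℕ) (x y : X) :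
    dist (compWord f ω n x) (compWord f ω n y) ≤ K ^ (n / 2) * graphDist f x y := by
  induction n using Nat.strong_induction_on generalizing ω with
  | _ n ih =>
  match n with
  | 0 => simpa [compWord] using dist_le_graphDist f x y
  | 1 => simpa [compWord] using dist_apply_le_graphDist f (ω 0) x y
  | n + 2 =>
    set g := compWord f (fun k => ω (k + 2)) n
    have hg : dist (g x) (g y) ≤ K ^ (n / 2) * graphDist f x y := ih n (by omega) _
    -- `compWord f (Stream'.cons i s) (n + 1)` is definitionally `f i ∘ compWord f s n`
    have hfg (i : I) : dist (f i (g x)) (f i (g y)) ≤ K ^ (n / 2) * graphDist f x y :=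
      (ih (n + 1) (by omega) (Stream'.cons i fun k => ω (k + 2))).trans <|
        mul_le_mul_of_nonneg_right
          (pow_le_pow_of_le_one K.2 hf.1.le (Nat.div_le_div_right n.le_succ))
          (graphDist_nonneg f x y)
    calc dist (f (ω 0) (f (ω 1) (g x))) (f (ω 0) (f (ω 1) (g y)))
        ≤ K * max (dist (g x) (g y))
            (max (dist (f (ω 0) (g x)) (f (ω 0) (g y))) (dist (f (ω 1) (g x)) (f (ω 1) (g y)))) :=
          hf.2 _ _ _ _
      _ ≤ K * (K ^ (n / 2) * graphDist f x y) := by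
          gcongr
          exact max_le hg (max_le (hfg _) (hfg _))
      _ = K ^ ((n + 2) / 2) * graphDist f x y := by
          rw [Nat.add_div_right n two_pos, pow_succ]
          ring

theorem cauchySeq_compWord (hf : ConvexContractingWith K f) (ω : ℕ → I) (x : X) :
    CauchySeq fun n => compWord f ω n x := by
  refine cauchySeq_of_summable_dist <| Summable.of_nonneg_of_le (fun _ => dist_nonneg)
    (fun n => ?_) ((summable_pow_div_two K.2 hf.1).mul_right (∑ i, graphDist f x (f i x)))
  calc dist (compWord f ω n x) (compWord f ω (n + 1) x)
      = dist (compWord f ω n x) (compWord f ω n (f (ω n) x)) := by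
        rw [compWord_succ_apply]
    _ ≤ K ^ (n / 2) * graphDist f x (f (ω n) x) := hf.dist_compWord_le ω n _ _
    _ ≤ K ^ (n / 2) * ∑ i, graphDist f x (f i x) := by
        gcongr
        exact Finset.single_le_sum (fun i _ => graphDist_nonneg f x (f i x)) (Finset.mem_univ _)

theorem tendstoUniformlyOn_compWord (hf : ConvexContractingWith K f)
    (hcont : ∀ i, Continuous (f i)) (ω : ℕ → I) {x p : X}
    (hx : Tendsto (fun n => compWord f ω n x) atTop (𝓝 p)) {B : Set X} (hB : IsCompact B) :
    TendstoUniformlyOn (compWord f ω) (fun _ => p) atTop B := by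
  obtain ⟨M, hM⟩ := hB.bddAbove_image (continuous_graphDist_left hcont x).continuousOn
  refine tendstoUniformlyOn_of_dist_le
    (ε := fun n => dist (compWord f ω n x) p + K ^ (n / 2) * M) ?_ (.of_forall fun n z hz => ?_)
  · simpa using (tendsto_iff_dist_tendsto_zero.1 hx).add
      ((summable_pow_div_two K.2 hf.1).tendsto_atTop_zero.mul_const M)
  · calc dist p (compWord f ω n z)
        ≤ dist (compWord f ω n x) p + dist (compWord f ω n z) (compWord f ω n x) := by
          rw [dist_comm (compWord f ω n z)]
          exact dist_triangle_left _ _ _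
      _ ≤ dist (compWord f ω n x) p + K ^ (n / 2) * M := by
          gcongr
          exact (hf.dist_compWord_le ω n z x).trans
            (mul_le_mul_of_nonneg_left (hM ⟨z, hz, rfl⟩) (by positivity))

end ConvexContractingWith

end ConvexContraction

theorem IFS_convex_contractions_pointwise_limit_general
    {X : Type*} [MetricSpace X] [CompleteSpace X] [Nonempty X]
    {I : Type*} [Finite I]
    (f : I → X → X) (hf : ∀ i, Continuous (f i))
    (a b c : I → I → ℝ)
    (ha : ∀ i j, 0 ≤ a i j) (hb : ∀ i j, 0 ≤ b i j) (hc : ∀ i j, 0 ≤ c i j)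
    (hd : ∀ i j, a i j + b i j + c i j < 1)
    (hcc : ∀ i j (x y : X),
      dist (f i (f j x)) (f i (f j y)) ≤
        a i j * dist x y + b i j * dist (f i x) (f i y) + c i j * dist (f j x) (f j y))
    (ω : ℕ → I) :
    ∃ aω : X, ∀ B : Set X, B.Nonempty → IsCompact B →
      Filter.Tendsto
        (fun n : ℕ => EMetric.hausdorffEdist (compWord f ω n '' B) {aω})
        Filter.atTop (nhds 0) := by
  cases nonempty_fintype I
  have : Nonempty I := ⟨ω 0⟩
  obtain ⟨K, hK⟩ := exists_convexContractingWith ha hb hc hd hcc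
  obtain ⟨x₀⟩ := ‹Nonempty X›
  obtain ⟨p, hp⟩ := cauchySeq_tendsto_of_complete (hK.cauchySeq_compWord ω x₀)
  exact ⟨p, fun B hB hBc =>
    (hK.tendstoUniformlyOn_compWord hf ω hp hBc).tendsto_hausdorffEDist_image_singleton hB⟩

/-- For each infinite word ω there is a point a_ω such that the images of any
nonempty compact set under the first n maps of ω converge to {a_ω}. -/
theorem IFS_convex_contractions_pointwise_limit
    {X : Type*} [MetricSpace X] [CompleteSpace X] [Nonempty X]
    {I : Type*} [Finite I] [Nonempty I]
    (f : I → X → X) (hf : ∀ i, Continuous (f i))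
    (a b c : I → I → ℝ)
    (ha : ∀ i j, 0 ≤ a i j) (hb : ∀ i j, 0 ≤ b i j) (hc : ∀ i j, 0 ≤ c i j)
    (hd : ∀ i j, a i j + b i j + c i j < 1)
    (hcc : ∀ i j (x y : X),
      dist (f i (f j x)) (f i (f j y)) ≤
        a i j * dist x y + b i j * dist (f i x) (f i y) + c i j * dist (f j x) (f j y))
    (ω : ℕ → I) :
    ∃ aω : X, ∀ B : Set X, B.Nonempty → IsCompact B →
      Filter.Tendsto
        (fun n : ℕ => EMetric.hausdorffEdist (compWord f ω n '' B) {aω})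
        Filter.atTop (nhds 0) :=
  IFS_convex_contractions_pointwise_limit_general f hf a b c ha hb hc hd hcc ω
end

section
/- Let S = ((X,d), (f_i)_{i∈I}) be an iterated function system consisting of convex contractions with attractor A, and define π : I^ℕ → A by π(ω) = a_ω, where {a_ω} is the common limit of f_{[ω]_n}(B) in the Hausdorff metric. Then π is continuous (where I^ℕ carries the metric d_Λ(α,β) = 2^{−n} with n the first index where α and β differ), π is surjective onto A, and π(iω) = f_i(π(ω)) for every i ∈ I and ω ∈ I^ℕ. -/
/-!
Taking `B = {x₀}` with `x₀ ∈ A` shows that `π ω` is the limit of `f_{[ω]_n}(x₀)`.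
Applying the convex contraction inequality to consecutive pairs of letters shows that on the
invariant bounded set `A` every word of length `n` shrinks distances to at most
`r ^ ⌊n/2⌋ · diam A`, where `r = max (a + b + c) < 1`, uniformly in the word.
With `σ` the left shift, passing to the limit in `f_{[ω]_{N+n}} = f_{[ω]_N} ∘ f_{[σ^N ω]_n}` gives
`π ω = f_{[ω]_N} (π (σ^N ω))`: for `N = 1` this is the equivariance, and since `π (σ^N ω) ∈ A`
the uniform bound makes `π ω` depend continuously on the first `N` letters.
Finally every `x ∈ A` has a backward orbit `x = f_{ω₀}(x₁)`, `x₁ = f_{ω₁}(x₂)`, … inside `A`,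
so `x = f_{[ω]_n}(x_n)` stays within `r ^ ⌊n/2⌋ · diam A` of `f_{[ω]_n}(x₀)`, whence `x = π ω`.
-/

open Filter Topology Set Metric

section compWord

variable {I X : Type*} (f : I → X → X)

lemma compWord_cons (i : I) (ω : ℕ → I) (n : ℕ) (x : X) :
    compWord f (fun k => Nat.casesOn k i ω) (n + 1) x = f i (compWord f ω n x) := rfl

lemma compWord_add (ω : ℕ → I) (m n : ℕ) (x : X) :
    compWord f ω (m + n) x = compWord f ω m (compWord f (fun k => ω (k + m)) n x) := by
  induction m generalizing ω with
  | zero => rw [Nat.zero_add]; rfl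
  | succ m ih =>
    rw [Nat.add_right_comm]
    exact congrArg (f (ω 0)) (ih _)

lemma compWord_succ_apply_right (ω : ℕ → I) (n : ℕ) (x : X) :
    compWord f ω (n + 1) x = compWord f ω n (f (ω n) x) := by
  rw [compWord_add]
  simp [compWord]

lemma compWord_congr {α β : ℕ → I} {n : ℕ} (h : ∀ k < n, α k = β k) :
    compWord f α n = compWord f β n := by
  induction n generalizing α β with
  | zero => rfl
  | succ n ih =>
    show f (α 0) ∘ compWord f _ n = f (β 0) ∘ compWord f _ n
    rw [h 0 n.succ_pos, ih fun k hk => h (k + 1) (by omega)]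

lemma mapsTo_compWord {A : Set X} (hA : ∀ i, MapsTo (f i) A A) (ω : ℕ → I) (n : ℕ) :
    MapsTo (compWord f ω n) A A := by
  induction n generalizing ω with
  | zero => exact mapsTo_id A
  | succ n ih => exact (hA _).comp (ih _)

lemma continuous_compWord [TopologicalSpace X] {f : I → X → X} (hf : ∀ i, Continuous (f i))
    (ω : ℕ → I) (n : ℕ) : Continuous (compWord f ω n) := by
  induction n generalizing ω with
  | zero => exact continuous_id
  | succ n ih => exact (hf _).comp (ih _)

end compWord

lemma dist_comp_le_of_convex_contraction {X : Type*} [PseudoMetricSpace X] {g h : X → X}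
    {a b c δ : ℝ} (ha : 0 ≤ a) (hb : 0 ≤ b) (hc : 0 ≤ c)
    (hgh : ∀ x y, dist (g (h x)) (g (h y)) ≤
      a * dist x y + b * dist (g x) (g y) + c * dist (h x) (h y))
    {u v : X} (huv : dist u v ≤ δ) (hguv : dist (g u) (g v) ≤ δ) (hhuv : dist (h u) (h v) ≤ δ) :
    dist (g (h u)) (g (h v)) ≤ (a + b + c) * δ :=
  calc dist (g (h u)) (g (h v))
      ≤ a * dist u v + b * dist (g u) (g v) + c * dist (h u) (h v) := hgh u v
    _ ≤ a * δ + b * δ + c * δ := by gcongr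
    _ = (a + b + c) * δ := by ring

lemma dist_compWord_le_pow_mul_diam {I X : Type*} [PseudoMetricSpace X] {f : I → X → X}
    {a b c : I → I → ℝ} (ha : ∀ i j, 0 ≤ a i j) (hb : ∀ i j, 0 ≤ b i j) (hc : ∀ i j, 0 ≤ c i j)
    (hcc : ∀ i j (x y : X),
      dist (f i (f j x)) (f i (f j y)) ≤
        a i j * dist x y + b i j * dist (f i x) (f i y) + c i j * dist (f j x) (f j y))
    {r : ℝ} (hr : ∀ i j, a i j + b i j + c i j ≤ r)
    {A : Set X} (hA : ∀ i, MapsTo (f i) A A) (hAb : Bornology.IsBounded A) (m : ℕ) :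
    ∀ n, 2 * m ≤ n → ∀ ω : ℕ → I, ∀ x ∈ A, ∀ y ∈ A,
      dist (compWord f ω n x) (compWord f ω n y) ≤ r ^ m * diam A := by
  induction m with
  | zero =>
    intro n _ ω x hx y hy
    simpa using dist_le_diam_of_mem hAb (mapsTo_compWord f hA ω n hx)
      (mapsTo_compWord f hA ω n hy)
  | succ m ih =>
    rintro (_ | _ | n) hn ω x hx y hy
    · omega
    · omega
    set ω' : ℕ → I := fun k => ω (k + 2)
    have hcons : ∀ i, dist (f i (compWord f ω' n x)) (f i (compWord f ω' n y)) ≤ r ^ m * diam A :=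
      fun i => by
        rw [← compWord_cons f i ω' n x, ← compWord_cons f i ω' n y]
        exact ih (n + 1) (by omega) _ x hx y hy
    have hω' := ih n (by omega) ω' x hx y hy
    have hδ := dist_comp_le_of_convex_contraction (ha _ _) (hb _ _) (hc (ω 0) (ω 1)) (hcc _ _)
      hω' (hcons (ω 0)) (hcons (ω 1))
    calc dist (compWord f ω (n + 2) x) (compWord f ω (n + 2) y)
        ≤ (a (ω 0) (ω 1) + b (ω 0) (ω 1) + c (ω 0) (ω 1)) * (r ^ m * diam A) := hδ
      _ ≤ r * (r ^ m * diam A) := mul_le_mul_of_nonneg_right (hr _ _) (dist_nonneg.trans hω')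
      _ = r ^ (m + 1) * diam A := by ring

lemma exists_nonneg_lt_one_forall_le {ι : Type*} [Finite ι] (g : ι → ℝ) (hg : ∀ i, g i < 1) :
    ∃ r, 0 ≤ r ∧ r < 1 ∧ ∀ i, g i ≤ r := by
  rcases isEmpty_or_nonempty ι with _ | _
  · exact ⟨0, le_rfl, one_pos, isEmptyElim⟩
  · obtain ⟨i₀, hi₀⟩ := Finite.exists_max g
    exact ⟨max (g i₀) 0, le_max_right _ _, max_lt (hg i₀) one_pos,
      fun i => (hi₀ i).trans (le_max_left _ _)⟩

lemma exists_tendsto_zero_dist_compWord_le {I X : Type*} [Finite I] [PseudoMetricSpace X]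
    {f : I → X → X} {a b c : I → I → ℝ}
    (ha : ∀ i j, 0 ≤ a i j) (hb : ∀ i j, 0 ≤ b i j) (hc : ∀ i j, 0 ≤ c i j)
    (hd : ∀ i j, a i j + b i j + c i j < 1)
    (hcc : ∀ i j (x y : X),
      dist (f i (f j x)) (f i (f j y)) ≤
        a i j * dist x y + b i j * dist (f i x) (f i y) + c i j * dist (f j x) (f j y))
    {A : Set X} (hA : ∀ i, MapsTo (f i) A A) (hAb : Bornology.IsBounded A) :
    ∃ ε : ℕ → ℝ, Tendsto ε atTop (𝓝 0) ∧ ∀ ω n, ∀ x ∈ A, ∀ y ∈ A,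
      dist (compWord f ω n x) (compWord f ω n y) ≤ ε n := by
  obtain ⟨r, hr0, hr1, hr⟩ :=
    exists_nonneg_lt_one_forall_le (fun p : I × I => a p.1 p.2 + b p.1 p.2 + c p.1 p.2)
      fun p => hd p.1 p.2
  refine ⟨fun n => r ^ (n / 2) * diam A, ?_, fun ω n =>
    dist_compWord_le_pow_mul_diam ha hb hc hcc (fun i j => hr (i, j)) hA hAb (n / 2) n
      (Nat.mul_div_le n 2) ω⟩
  have hhalf : Tendsto (fun n : ℕ => n / 2) atTop atTop :=
    Nat.tendsto_div_const_atTop two_ne_zero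
  simpa using ((tendsto_pow_atTop_nhds_zero_of_lt_one hr0 hr1).comp hhalf).mul_const (diam A)

lemma exists_forall_compWord_eq {I X : Type*} (f : I → X → X) {A : Set X}
    (hA : A ⊆ ⋃ i, f i '' A) {x : X} (hx : x ∈ A) :
    ∃ ω : ℕ → I, ∃ s : ℕ → X, (∀ n, s n ∈ A) ∧ ∀ n, compWord f ω n (s n) = x := by
  have hpre : ∀ y : A, ∃ i, ∃ z : A, f i z = y := fun y => by
    obtain ⟨i, z, hz, hzy⟩ := mem_iUnion.1 (hA y.2)
    exact ⟨i, ⟨z, hz⟩, hzy⟩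
  choose idx pre hpre using hpre
  let s : ℕ → A := fun n => pre^[n] ⟨x, hx⟩
  refine ⟨fun n => idx (s n), fun n => s n, fun n => (s n).2, fun n => ?_⟩
  induction n with
  | zero => rfl
  | succ n ih =>
    rw [compWord_succ_apply_right]
    simpa only [s, Function.iterate_succ_apply', hpre] using ih

section limit

variable {I X : Type*} {f : I → X → X} {π : (ℕ → I) → X} {x₀ : X}

lemma eq_compWord_shift_of_tendsto [TopologicalSpace X] [T2Space X] (hf : ∀ i, Continuous (f i))
    (hπ : ∀ ω, Tendsto (fun n => compWord f ω n x₀) atTop (𝓝 (π ω))) (ω : ℕ → I) (N : ℕ) :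
    π ω = compWord f ω N (π fun k => ω (k + N)) := by
  refine tendsto_nhds_unique ?_ (((continuous_compWord hf ω N).tendsto _).comp (hπ _))
  simpa only [Function.comp_def, ← compWord_add, Nat.add_comm N] using
    (hπ ω).comp (tendsto_add_atTop_nat N)

lemma mem_of_tendsto_compWord [TopologicalSpace X] {A : Set X} (hAc : IsClosed A)
    (hA : ∀ i, MapsTo (f i) A A) (hx₀ : x₀ ∈ A)
    (hπ : ∀ ω, Tendsto (fun n => compWord f ω n x₀) atTop (𝓝 (π ω))) (ω : ℕ → I) : π ω ∈ A :=
  hAc.mem_of_tendsto (hπ ω) (Eventually.of_forall fun n => mapsTo_compWord f hA ω n hx₀)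

lemma mem_range_of_tendsto_compWord [MetricSpace X] {A : Set X} (hA : A ⊆ ⋃ i, f i '' A)
    (hx₀ : x₀ ∈ A) (hπ : ∀ ω, Tendsto (fun n => compWord f ω n x₀) atTop (𝓝 (π ω)))
    {ε : ℕ → ℝ} (hε : Tendsto ε atTop (𝓝 0))
    (hdist : ∀ ω n, ∀ x ∈ A, ∀ y ∈ A, dist (compWord f ω n x) (compWord f ω n y) ≤ ε n)
    {x : X} (hx : x ∈ A) : x ∈ range π := by
  obtain ⟨ω, s, hsA, hsx⟩ := exists_forall_compWord_eq f hA hx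
  have hbound : ∀ n, dist (compWord f ω n x₀) x ≤ ε n := fun n => by
    simpa only [hsx] using hdist ω n x₀ hx₀ (s n) (hsA n)
  exact ⟨ω, tendsto_nhds_unique (hπ ω)
    (tendsto_iff_dist_tendsto_zero.2 (squeeze_zero (fun _ => dist_nonneg) hbound hε))⟩

lemma continuous_of_tendsto_compWord [TopologicalSpace I] [DiscreteTopology I] [MetricSpace X]
    {A : Set X} (hf : ∀ i, Continuous (f i))
    (hπ : ∀ ω, Tendsto (fun n => compWord f ω n x₀) atTop (𝓝 (π ω))) (hπA : ∀ ω, π ω ∈ A)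
    {ε : ℕ → ℝ} (hε : Tendsto ε atTop (𝓝 0))
    (hdist : ∀ ω n, ∀ x ∈ A, ∀ y ∈ A, dist (compWord f ω n x) (compWord f ω n y) ≤ ε n) :
    Continuous π := by
  let := PiNat.metricSpace (E := fun _ : ℕ => I)
  refine Metric.continuous_iff.2 fun ω δ hδ => ?_
  obtain ⟨N, hN⟩ := (hε.eventually (gt_mem_nhds hδ)).exists
  refine ⟨(1 / 2) ^ N, by positivity, fun α hα => ?_⟩
  have hagree : ∀ k < N, α k = ω k := fun k hk => PiNat.apply_eq_of_dist_lt hα hk.le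
  rw [eq_compWord_shift_of_tendsto hf hπ α N, eq_compWord_shift_of_tendsto hf hπ ω N,
    compWord_congr f hagree]
  exact (hdist ω N _ (hπA _) _ (hπA _)).trans_lt hN

end limit

theorem IFS_convex_contractions_canonical_projection_general
    {X : Type*} [MetricSpace X]
    {I : Type*} [Finite I] [TopologicalSpace I] [DiscreteTopology I]
    (f : I → X → X) (hf : ∀ i, Continuous (f i))
    (a b c : I → I → ℝ)
    (ha : ∀ i j, 0 ≤ a i j) (hb : ∀ i j, 0 ≤ b i j) (hc : ∀ i j, 0 ≤ c i j)
    (hd : ∀ i j, a i j + b i j + c i j < 1)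
    (hcc : ∀ i j (x y : X),
      dist (f i (f j x)) (f i (f j y)) ≤
        a i j * dist x y + b i j * dist (f i x) (f i y) + c i j * dist (f j x) (f j y))
    (A : Set X) (hAne : A.Nonempty) (hAc : IsCompact A) (hAfix : (⋃ i, f i '' A) = A)
    (π : (ℕ → I) → X)
    (hπ : ∀ (ω : ℕ → I) (B : Set X), B.Nonempty → IsCompact B →
      Filter.Tendsto
        (fun n : ℕ => EMetric.hausdorffEdist (compWord f ω n '' B) {π ω})
        Filter.atTop (nhds 0)) :
    (letI : MetricSpace (ℕ → I) := PiNat.metricSpace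
     Continuous π) ∧
    Set.range π = A ∧
    (∀ (i : I) (ω : ℕ → I),
      π (fun n => Nat.casesOn n i ω) = f i (π ω)) := by
  obtain ⟨x₀, hx₀⟩ := hAne
  have hA : ∀ i, MapsTo (f i) A A := fun i x hx =>
    hAfix ▸ mem_iUnion_of_mem i (mem_image_of_mem (f i) hx)
  have hπx₀ : ∀ ω, Tendsto (fun n => compWord f ω n x₀) atTop (𝓝 (π ω)) := fun ω => by
    have h := hπ ω {x₀} (singleton_nonempty x₀) isCompact_singleton
    simp only [image_singleton] at h
    exact tendsto_iff_edist_tendsto_0.2 (h.congr fun _ => Metric.hausdorffEDist_singleton)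
  obtain ⟨ε, hε, hdist⟩ :=
    exists_tendsto_zero_dist_compWord_le ha hb hc hd hcc hA hAc.isBounded
  have hπA := mem_of_tendsto_compWord hAc.isClosed hA hx₀ hπx₀
  refine ⟨continuous_of_tendsto_compWord hf hπx₀ hπA hε hdist, ?_,
    fun i ω => eq_compWord_shift_of_tendsto hf hπx₀ _ 1⟩
  exact (range_subset_iff.2 hπA).antisymm fun x hx =>
    mem_range_of_tendsto_compWord hAfix.ge hx₀ hπx₀ hε hdist hx

/-- The canonical projection π(ω) = a_ω from the code space (with the metric
d(α,β) = (1/2)^(first index where α, β differ)) onto the attractor A is continuous,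
surjective onto A, and satisfies π(iω) = f_i(π(ω)). -/
theorem IFS_convex_contractions_canonical_projection
    {X : Type*} [MetricSpace X] [CompleteSpace X] [Nonempty X]
    {I : Type*} [Finite I] [Nonempty I] [TopologicalSpace I] [DiscreteTopology I]
    (f : I → X → X) (hf : ∀ i, Continuous (f i))
    (a b c : I → I → ℝ)
    (ha : ∀ i j, 0 ≤ a i j) (hb : ∀ i j, 0 ≤ b i j) (hc : ∀ i j, 0 ≤ c i j)
    (hd : ∀ i j, a i j + b i j + c i j < 1)
    (hcc : ∀ i j (x y : X),
      dist (f i (f j x)) (f i (f j y)) ≤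
        a i j * dist x y + b i j * dist (f i x) (f i y) + c i j * dist (f j x) (f j y))
    (A : Set X) (hAne : A.Nonempty) (hAc : IsCompact A) (hAfix : (⋃ i, f i '' A) = A)
    (π : (ℕ → I) → X)
    (hπ : ∀ (ω : ℕ → I) (B : Set X), B.Nonempty → IsCompact B →
      Filter.Tendsto
        (fun n : ℕ => EMetric.hausdorffEdist (compWord f ω n '' B) {π ω})
        Filter.atTop (nhds 0)) :
    (letI : MetricSpace (ℕ → I) := PiNat.metricSpace
     Continuous π) ∧
    Set.range π = A ∧
    (∀ (i : I) (ω : ℕ → I),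
      π (fun n => Nat.casesOn n i ω) = f i (π ω)) :=
  IFS_convex_contractions_canonical_projection_general f hf a b c ha hb hc hd hcc A hAne hAc hAfix π
    hπ
end
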